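/- arXiv:1109.6521 — 4 statements merged into one kernel-verified Lean document; each statement's English description precedes it below -/
import Mathlib

section
/- Let m ≥ 2 and suppose [1],[2],...,[2m²+m] is a cyclic ordering of the edges of K_{2m+1} in which every m cyclically consecutive edges are pairwise disjoint. For each i with 1 ≤ i ≤ m, let G_{[i]} be the spanning subgraph of K_{2m+1} whose edge set is the 2m+1 edges {[i],[i+m],[i+2m],...,[i+2m²]} (indices modulo 2m²+m). Then G_{[i]} is connected and has exactly 2m+1 edges on 2m+1 vertices (hence is unicyclic), and every vertex of G_{[i]} not on its unique cycle is adjacent in G_{[i]} to a vertex of that cycle. -/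
/-- Two edges of a graph (as unordered pairs of vertices) are *disjoint*
if they share no vertex. -/
def edgesDisjoint {V : Type*} (e₁ e₂ : Sym2 V) : Prop :=
  ∀ v : V, v ∈ e₁ → v ∉ e₂

/-- The number of edges of a graph `G`. -/
noncomputable def edgeCount {V : Type*} (G : SimpleGraph V) : ℕ :=
  Nat.card G.edgeSet

/-- A linear ordering `f` of the edges of `G` has matching number at least `d`
if every `d` consecutive edges in the ordering are pairwise disjoint. -/
def LinearGood {V : Type*} (G : SimpleGraph V)
    (f : Fin (edgeCount G) ≃ G.edgeSet) (d : ℕ) : Prop :=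
  ∀ j k : Fin (edgeCount G), j ≠ k → (j : ℕ) < (k : ℕ) + d → (k : ℕ) < (j : ℕ) + d →
    edgesDisjoint (f j : Sym2 V) (f k : Sym2 V)

/-- The matching sequencibility `ms G`: the largest `d` (necessarily at most the
number of edges) for which some linear ordering of the edges of `G` has every
`d` consecutive edges forming a matching. -/
noncomputable def ms {V : Type*} (G : SimpleGraph V) : ℕ :=
  sSup {d : ℕ | d ≤ edgeCount G ∧ ∃ f : Fin (edgeCount G) ≃ G.edgeSet, LinearGood G f d}

/-- A cyclic ordering `f : ZMod N ≃ edges of G` has cyclic matching number at least `d`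
if every `d` cyclically consecutive edges in the ordering are pairwise disjoint. -/
def CyclicGood {V : Type*} (G : SimpleGraph V) {N : ℕ}
    (f : ZMod N ≃ G.edgeSet) (d : ℕ) : Prop :=
  ∀ (i : ZMod N) (j k : ℕ), j < d → k < d → j ≠ k →
    edgesDisjoint (f (i + (j : ZMod N)) : Sym2 V) (f (i + (k : ZMod N)) : Sym2 V)

/-- The cyclic matching sequencibility `cms G`: the largest `d` for which some
cyclic ordering of the edges of `G` has every `d` cyclically consecutive edges
forming a matching. -/
noncomputable def cms {V : Type*} (G : SimpleGraph V) : ℕ :=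
  sSup {d : ℕ | ∃ f : ZMod (edgeCount G) ≃ G.edgeSet, CyclicGood G f d}

/-- The spanning subgraph `G_{[i]}` of `K_{2m+1}` on the `2m+1` edges
`f(i), f(i+m), f(i+2m), …, f(i+2m²)` of a cyclic ordering `f`. -/
def Gsub (m i : ℕ)
    (f : ZMod (2 * m ^ 2 + m) ≃ (⊤ : SimpleGraph (Fin (2 * m + 1))).edgeSet) :
    SimpleGraph (Fin (2 * m + 1)) :=
  SimpleGraph.fromEdgeSet
    {e : Sym2 (Fin (2 * m + 1)) | ∃ k : ℕ, k ≤ 2 * m ∧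
      e = (f ((i + k * m : ℕ) : ZMod (2 * m ^ 2 + m)) : Sym2 (Fin (2 * m + 1)))}

/-!
Write `e k = f (i + k m)`; then `e` has period `2m + 1` and `G_{[i]}` consists of the distinct
edges `e 0, …, e (2m)`. Among the consecutive edges `f x, …, f (x + m)` the middle `m - 1` form a
matching covering `2m - 2` of the `2m + 1` vertices, so `f x` and `f (x + m)` are two distinct
pairs inside the remaining three vertices. Hence `e k` and `e (k + 1)` meet, so `G_{[i]}` is a
closed chain of edges and in particular connected; and a vertex `v` missed by the block
`f (i + k m), …, f (i + k m + m - 1)` lies on `e (k + 1)`. Such a block exists because `v` has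
degree `2m` in `K_{2m+1}` while there are `2m + 1` blocks. The vertex where `e k` and `e (k + 1)`
meet lies on a cycle: following the chain from it, the meeting vertex must eventually move (no
vertex lies on `2m + 1` edges), and the edge along which it moves is closed into a cycle by the
remaining edges of the chain. So `v` is adjacent to a vertex on a cycle.
-/

lemma Nat.not_add_modEq_self {n a r : ℕ} (hr0 : 0 < r) (hrn : r < n) : ¬ a + r ≡ a [MOD n] := by
  rw [Nat.add_modEq_left_iff]
  exact fun h => absurd (Nat.le_of_dvd hr0 h) (by omega)

namespace SimpleGraph

variable {V : Type*} {G : SimpleGraph V}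

lemma reachable_of_mem_of_mem_edgeSet {e : Sym2 V} (he : e ∈ G.edgeSet) {u w : V}
    (hu : u ∈ e) (hw : w ∈ e) : G.Reachable u w := by
  obtain rfl | hne := eq_or_ne u w
  · rfl
  · exact (adj_iff_exists_edge.2 ⟨hne, e, he, hu, hw⟩).reachable

lemma exists_isCycle_of_adj_of_reachable_deleteEdges {v w : V} (h : G.Adj v w)
    (hr : (G.deleteEdges {s(v, w)}).Reachable v w) : ∃ p : G.Walk v v, p.IsCycle := by
  classical
  obtain ⟨u, p, hp, hvw⟩ := adj_and_reachable_delete_edges_iff_exists_cycle.1 ⟨h, hr⟩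
  have hv : v ∈ p.support := p.fst_mem_support_of_mem_edges hvw
  exact ⟨p.rotate v hv, hp.rotate hv⟩

lemma exists_lt_notMem_of_injOn [Fintype V] {N : ℕ} (hN : Fintype.card V ≤ N)
    {g : ℕ → Sym2 V} (hinj : Set.InjOn g (Set.Iio N)) (hg : ∀ t < N, g t ∈ G.edgeSet) (v : V) :
    ∃ t < N, v ∉ g t := by
  classical
  by_contra! h
  have hsub : (Finset.range N).image g ⊆ G.incidenceFinset v := by
    intro e he
    obtain ⟨t, ht, rfl⟩ := Finset.mem_image.1 he
    rw [Finset.mem_range] at ht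
    exact (mem_incidenceFinset G v _).2 ⟨hg t ht, h t ht⟩
  have hcard := Finset.card_le_card hsub
  rw [Finset.card_image_of_injOn (by simpa using hinj), Finset.card_range,
    card_incidenceFinset_eq_degree] at hcard
  have := G.degree_lt_card_verts v
  omega

/-- A closed chain of `n` distinct edges of `G`, indexed `n`-periodically by `ℕ`, in which
consecutive edges meet at `c k`. -/
structure IsClosedEdgeChain (G : SimpleGraph V) (n : ℕ) (e : ℕ → Sym2 V) (c : ℕ → V) : Prop where
  mem_edgeSet (k : ℕ) : e k ∈ G.edgeSet
  eq_iff_modEq (a b : ℕ) : e a = e b ↔ a ≡ b [MOD n]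
  mem_left (k : ℕ) : c k ∈ e k
  mem_right (k : ℕ) : c k ∈ e (k + 1)

namespace IsClosedEdgeChain

variable {n : ℕ} {e : ℕ → Sym2 V} {c : ℕ → V}

lemma reachable_of_forall_mem_edgeSet (hC : G.IsClosedEdgeChain n e c) {H : SimpleGraph V}
    (a t : ℕ) (hH : ∀ s ≤ t, e (a + s) ∈ H.edgeSet) {u w : V} (hu : u ∈ e a)
    (hw : w ∈ e (a + t)) : H.Reachable u w := by
  induction t generalizing w with
  | zero => exact reachable_of_mem_of_mem_edgeSet (hH 0 le_rfl) hu hw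
  | succ t ih =>
    have hlink : H.Reachable u (c (a + t)) :=
      ih (fun s hs => hH s (by omega)) (hC.mem_left _)
    exact hlink.trans (reachable_of_mem_of_mem_edgeSet (hH (t + 1) le_rfl) (hC.mem_right _) hw)

lemma connected (hC : G.IsClosedEdgeChain n e c) (hcover : ∀ v, ∃ k, v ∈ e k) : G.Connected := by
  have hroot (v : V) : G.Reachable (c 0) v := by
    obtain ⟨k, hk⟩ := hcover v
    exact hC.reachable_of_forall_mem_edgeSet 0 k (fun s _ => hC.mem_edgeSet _) (hC.mem_left 0)
      (by rwa [zero_add])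
  exact (connected_iff _).2 ⟨fun u w => (hroot u).symm.trans (hroot w), ⟨c 0⟩⟩

/-- The other `n - 1` edges of the chain still join the ends `c j`, `c (j + 1)` of `e (j + 1)`. -/
lemma exists_isCycle_of_ne (hC : G.IsClosedEdgeChain n e c) (hn : 2 ≤ n) (j : ℕ)
    (hne : c j ≠ c (j + 1)) : ∃ p : G.Walk (c j) (c j), p.IsCycle := by
  have hedge : e (j + 1) = s(c j, c (j + 1)) :=
    (Sym2.mem_and_mem_iff hne).1 ⟨hC.mem_right j, hC.mem_left (j + 1)⟩
  have hadj : G.Adj (c j) (c (j + 1)) := by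
    rw [← SimpleGraph.mem_edgeSet, ← hedge]
    exact hC.mem_edgeSet _
  refine exists_isCycle_of_adj_of_reachable_deleteEdges hadj (Reachable.symm ?_)
  refine hC.reachable_of_forall_mem_edgeSet (j + 2) (n - 2) (fun s hs => ?_) (hC.mem_right _) ?_
  · rw [edgeSet_deleteEdges, ← hedge]
    refine ⟨hC.mem_edgeSet _, fun h => ?_⟩
    have hmod : j + 1 + (s + 1) ≡ j + 1 [MOD n] := by
      rw [← hC.eq_iff_modEq, ← h]
      ring_nf
    exact Nat.not_add_modEq_self (by omega) (by omega) hmod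
  · have : e (j + 2 + (n - 2)) = e j := (hC.eq_iff_modEq _ _).2 <| by
      rw [show j + 2 + (n - 2) = j + n by omega]
      exact Nat.add_modEq_left_iff.2 dvd_rfl
    exact this ▸ hC.mem_left j

lemma exists_isCycle [Fintype V] (hC : G.IsClosedEdgeChain n e c) (hV : Fintype.card V ≤ n)
    (k : ℕ) : ∃ p : G.Walk (c k) (c k), p.IsCycle := by
  have hn : 2 ≤ n := by
    classical
    have h2 := Sym2.card_toFinset_of_not_isDiag _ (G.not_isDiag_of_mem_edgeSet (hC.mem_edgeSet 0))
    have := Finset.card_le_univ (e 0).toFinset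
    omega
  obtain ⟨t, hconst, hmove⟩ : ∃ t, c (k + t) = c k ∧ c (k + t + 1) ≠ c k := by
    by_contra! h
    have hconst (t : ℕ) : c (k + t) = c k := Nat.rec rfl (fun t ht => h t ht) t
    have hinj : Set.InjOn (fun t => e (k + t)) (Set.Iio n) := fun a ha b hb hab =>
      (Nat.ModEq.add_left_cancel' k ((hC.eq_iff_modEq _ _).1 hab)).eq_of_lt_of_lt ha hb
    obtain ⟨t, -, ht⟩ := exists_lt_notMem_of_injOn hV hinj (fun t _ => hC.mem_edgeSet _) (c k)
    exact ht (hconst t ▸ hC.mem_left _)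
  rw [← hconst]
  exact hC.exists_isCycle_of_ne hn _ (hconst ▸ hmove.symm)

end IsClosedEdgeChain

end SimpleGraph

section Block

open Finset

variable {V : Type*} [Fintype V]

/-- `d 0` and `d m` are distinct pairs inside the three vertices not covered by the matching
`d 1, …, d (m - 1)`. -/
lemma exists_mem_and_forall_mem_of_edgesDisjoint {m : ℕ} (hV : Fintype.card V = 2 * m + 1)
    (d : ℕ → Sym2 V) (hdiag : ∀ a ≤ m, ¬ (d a).IsDiag)
    (hdisj : ∀ a b, a < b → b < a + m → edgesDisjoint (d a) (d b)) (hne : d 0 ≠ d m) :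
    (∃ v, v ∈ d 0 ∧ v ∈ d m) ∧ ∀ v, (∀ a < m, v ∉ d a) → v ∈ d m := by
  classical
  have hcard (a : ℕ) (ha : a ≤ m) : #(d a).toFinset = 2 :=
    Sym2.card_toFinset_of_not_isDiag _ (hdiag a ha)
  have hdisj' (a b : ℕ) (ha : a ≤ m) (hb : b ≤ m) (hab : a ≠ b) (h0m : ¬ (a = 0 ∧ b = m))
      (hm0 : ¬ (a = m ∧ b = 0)) : Disjoint (d a).toFinset (d b).toFinset := by
    rw [Finset.disjoint_left]
    intro v hva hvb
    rw [Sym2.mem_toFinset] at hva hvb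
    rcases lt_or_gt_of_ne hab with h | h
    · exact hdisj a b h (by omega) v hva hvb
    · exact hdisj b a h (by omega) v hvb hva
  set S := (Ioo 0 m).biUnion fun a => (d a).toFinset
  set T := (d 0).toFinset ∪ (d m).toFinset
  have hS : #S = 2 * (m - 1) := by
    rw [card_biUnion fun a ha b hb hab => by
      simp only [coe_Ioo, Set.mem_Ioo] at ha hb
      exact hdisj' a b (by omega) (by omega) hab (by omega) (by omega)]
    rw [sum_congr rfl fun a ha => hcard a (mem_Ioo.1 ha).2.le, sum_const, Nat.card_Ioo,
      smul_eq_mul, mul_comm, Nat.sub_zero]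
  have hTS : Disjoint T S := by
    refine disjoint_union_left.2 ⟨?_, ?_⟩ <;>
    · refine disjoint_biUnion_right _ _ _ |>.2 fun a ha => ?_
      rw [mem_Ioo] at ha
      exact hdisj' _ a (by omega) ha.2.le (by omega) (by omega) (by omega)
  have hTS_card : #T + #S ≤ 2 * m + 1 := by
    rw [← card_union_of_disjoint hTS, ← hV]
    exact card_le_univ _
  have hunion : #T + #((d 0).toFinset ∩ (d m).toFinset) = 4 := by
    rw [card_union_add_card_inter, hcard 0 (Nat.zero_le _), hcard m le_rfl]
  have hinter : #((d 0).toFinset ∩ (d m).toFinset) ≠ 2 := fun h => by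
    have hsub : (d 0).toFinset ⊆ (d m).toFinset := inter_eq_left.1 <|
      eq_of_subset_of_card_le inter_subset_left (by rw [h, hcard 0 (Nat.zero_le _)])
    have heq := eq_of_subset_of_card_le hsub (by rw [hcard 0 (Nat.zero_le _), hcard m le_rfl])
    exact hne (Sym2.ext fun v => by rw [← Sym2.mem_toFinset, heq, Sym2.mem_toFinset])
  have hinter_le : #((d 0).toFinset ∩ (d m).toFinset) ≤ 2 :=
    hcard 0 (Nat.zero_le _) ▸ card_le_card inter_subset_left
  constructor
  · obtain ⟨v, hv⟩ : ((d 0).toFinset ∩ (d m).toFinset).Nonempty := by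
      rw [← card_pos]
      omega
    rw [mem_inter, Sym2.mem_toFinset, Sym2.mem_toFinset] at hv
    exact ⟨v, hv⟩
  · intro v hv
    have hTS_univ : T ∪ S = univ := eq_univ_of_card _ <| by
      rw [card_union_of_disjoint hTS, hV]
      omega
    have hvTS : v ∈ T ∪ S := hTS_univ ▸ mem_univ v
    simp only [T, S, mem_union, mem_biUnion, mem_Ioo, Sym2.mem_toFinset] at hvTS
    obtain (h | h) | ⟨a, ha, hva⟩ := hvTS
    · exact absurd h (hv 0 (by omega))
    · exact h
    · exact absurd hva (hv a ha.2)

end Block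

lemma CyclicGood.edgesDisjoint_of_lt {V : Type*} {G : SimpleGraph V} {N d : ℕ}
    {f : ZMod N ≃ G.edgeSet} (hf : CyclicGood G f d) (x : ZMod N) {a b : ℕ} (hab : a < b)
    (hb : b < a + d) : edgesDisjoint (f (x + a) : Sym2 V) (f (x + b)) := by
  have h := hf (x + a) 0 (b - a) (by omega) (by omega) (by omega)
  rwa [Nat.cast_zero, add_zero, Nat.cast_sub hab.le, add_add_sub_cancel] at h

namespace Gsub

variable {m : ℕ} (i : ℕ) (f : ZMod (2 * m ^ 2 + m) ≃ (⊤ : SimpleGraph (Fin (2 * m + 1))).edgeSet)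

def edge (k : ℕ) : Sym2 (Fin (2 * m + 1)) :=
  f ((i + k * m : ℕ) : ZMod (2 * m ^ 2 + m))

def blockEdge (k a : ℕ) : Sym2 (Fin (2 * m + 1)) :=
  f (((i + k * m : ℕ) : ZMod (2 * m ^ 2 + m)) + a)

variable {i f}

lemma blockEdge_zero (k : ℕ) : blockEdge i f k 0 = edge i f k := by
  rw [blockEdge, Nat.cast_zero, add_zero, edge]

lemma edge_eq_iff (hm : 0 < m) {a b : ℕ} : edge i f a = edge i f b ↔ a ≡ b [MOD 2 * m + 1] := by
  have hN : 2 * m ^ 2 + m = (2 * m + 1) * m := by ring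
  rw [edge, edge, Subtype.coe_inj, f.injective.eq_iff, ZMod.natCast_eq_natCast_iff, hN]
  constructor
  · exact fun h => Nat.ModEq.mul_right_cancel' hm.ne' (Nat.ModEq.add_left_cancel' i h)
  · exact fun h => (h.mul_right' m).add_left i

lemma edgeSet_eq :
    (Gsub m i f).edgeSet = edge i f '' Set.Iio (2 * m + 1) := by
  ext e
  simp only [Gsub, SimpleGraph.edgeSet_fromEdgeSet, Set.mem_sdiff, Set.mem_ofPred_eq,
    Set.mem_image, Set.mem_Iio]
  constructor
  · rintro ⟨⟨k, hk, rfl⟩, -⟩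
    exact ⟨k, by omega, rfl⟩
  · rintro ⟨k, hk, rfl⟩
    exact ⟨⟨k, by omega, rfl⟩, SimpleGraph.not_isDiag_of_mem_edgeSet _ (f _).2⟩

lemma edge_mem_edgeSet (hm : 0 < m) (k : ℕ) : edge i f k ∈ (Gsub m i f).edgeSet := by
  rw [edgeSet_eq]
  exact ⟨k % (2 * m + 1), Nat.mod_lt _ (by omega), (edge_eq_iff hm).2 (Nat.mod_modEq _ _)⟩

lemma ncard_edgeSet (hm : 0 < m) : (Gsub m i f).edgeSet.ncard = 2 * m + 1 := by
  have hinj : Set.InjOn (edge i f) (Set.Iio (2 * m + 1)) := fun a ha b hb h =>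
    ((edge_eq_iff hm).1 h).eq_of_lt_of_lt ha hb
  rw [edgeSet_eq, hinj.ncard_image, Set.ncard_Iio_nat]

lemma exists_mem_edge_and_forall_mem (hm : 0 < m)
    (hf : CyclicGood (⊤ : SimpleGraph (Fin (2 * m + 1))) f m) (k : ℕ) :
    (∃ v, v ∈ edge i f k ∧ v ∈ edge i f (k + 1)) ∧
      ∀ v, (∀ a < m, v ∉ blockEdge i f k a) → v ∈ edge i f (k + 1) := by
  have h0 := blockEdge_zero (i := i) (f := f) k
  have hm' : blockEdge i f k m = edge i f (k + 1) := by
    simp only [blockEdge, edge]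
    congr 3
    push_cast
    ring
  have hne : edge i f k ≠ edge i f (k + 1) := fun h =>
    Nat.not_add_modEq_self one_pos (by omega) ((edge_eq_iff hm).1 h).symm
  have key := exists_mem_and_forall_mem_of_edgesDisjoint (Fintype.card_fin _) (blockEdge i f k)
    (fun _ _ => SimpleGraph.not_isDiag_of_mem_edgeSet _ (f _).2)
    (fun _ _ => hf.edgesDisjoint_of_lt _) (by rwa [h0, hm'])
  rwa [h0, hm'] at key

lemma exists_forall_notMem (hm : 0 < m) (v : Fin (2 * m + 1)) :
    ∃ k, ∀ a < m, v ∉ blockEdge i f k a := by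
  by_contra! h
  choose a ha hva using h
  have hinj : Set.InjOn (fun t => blockEdge i f t (a t)) (Set.Iio (2 * m + 1)) := by
    intro t₁ ht₁ t₂ ht₂ h
    have hcast := f.injective (Subtype.ext h)
    rw [← Nat.cast_add, ← Nat.cast_add, ZMod.natCast_eq_natCast_iff, add_assoc, add_assoc]
      at hcast
    have hlt (t : ℕ) (ht : t < 2 * m + 1) : t * m + a t < 2 * m ^ 2 + m := by
      nlinarith [ha t]
    have hsum := (Nat.ModEq.add_left_cancel' i hcast).eq_of_lt_of_lt (hlt t₁ ht₁) (hlt t₂ ht₂)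
    have hdiv := congrArg (· / m) hsum
    simpa only [add_comm (_ * m), Nat.add_mul_div_right _ _ hm, Nat.div_eq_of_lt (ha _),
      zero_add] using hdiv
  obtain ⟨t, -, ht⟩ := SimpleGraph.exists_lt_notMem_of_injOn (G := ⊤) (Fintype.card_fin _).le
    hinj (fun t _ => (f _).2) v
  exact ht (hva t)

lemma exists_notMem_edge_mem_edge_succ (hm : 0 < m)
    (hf : CyclicGood (⊤ : SimpleGraph (Fin (2 * m + 1))) f m) (v : Fin (2 * m + 1)) :
    ∃ k, v ∉ edge i f k ∧ v ∈ edge i f (k + 1) := by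
  obtain ⟨k, hk⟩ := exists_forall_notMem (i := i) (f := f) hm v
  refine ⟨k, ?_, (exists_mem_edge_and_forall_mem hm hf k).2 v hk⟩
  rw [← blockEdge_zero]
  exact hk 0 hm

end Gsub

theorem unicyclic_structure_general (m : ℕ) (hm : 2 ≤ m)
    (f : ZMod (2 * m ^ 2 + m) ≃ (⊤ : SimpleGraph (Fin (2 * m + 1))).edgeSet)
    (hf : CyclicGood (⊤ : SimpleGraph (Fin (2 * m + 1))) f m)
    (i : ℕ) :
    (Gsub m i f).Connected ∧
    (Gsub m i f).edgeSet.ncard = 2 * m + 1 ∧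
    (∀ v : Fin (2 * m + 1), ¬ (∃ c : (Gsub m i f).Walk v v, c.IsCycle) →
      ∃ w : Fin (2 * m + 1), (Gsub m i f).Adj v w ∧
        ∃ c : (Gsub m i f).Walk w w, c.IsCycle) := by
  have hm0 : 0 < m := by omega
  choose c hc using fun k => (Gsub.exists_mem_edge_and_forall_mem (i := i) hm0 hf k).1
  have hC : (Gsub m i f).IsClosedEdgeChain (2 * m + 1) (Gsub.edge i f) c :=
    ⟨Gsub.edge_mem_edgeSet hm0, fun _ _ => Gsub.edge_eq_iff hm0, fun k => (hc k).1,
      fun k => (hc k).2⟩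
  refine ⟨hC.connected fun v => ?_, Gsub.ncard_edgeSet hm0, fun v _ => ?_⟩
  · obtain ⟨k, -, hk⟩ := Gsub.exists_notMem_edge_mem_edge_succ hm0 hf v
    exact ⟨k + 1, hk⟩
  · obtain ⟨k, hvk, hvk1⟩ := Gsub.exists_notMem_edge_mem_edge_succ hm0 hf v
    refine ⟨c k, ?_, hC.exists_isCycle (Fintype.card_fin _).le k⟩
    exact SimpleGraph.adj_iff_exists_edge.2
      ⟨fun h => hvk (h ▸ (hc k).1), _, hC.mem_edgeSet (k + 1), hvk1, (hc k).2⟩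

/-- Suppose `m ≥ 2` and `f` is a cyclic ordering of the `2m² + m`
edges of `K_{2m+1}` in which every `m` cyclically consecutive edges are pairwise
disjoint.  For each `1 ≤ i ≤ m`, the spanning subgraph `G_{[i]}` with the `2m+1`
edges `f(i), f(i+m), …, f(i+2m²)` is connected with exactly `2m+1` edges on its
`2m+1` vertices (hence unicyclic), and every vertex not lying on a cycle of
`G_{[i]}` is adjacent in `G_{[i]}` to a vertex lying on a cycle. -/
theorem unicyclic_structure (m : ℕ) (hm : 2 ≤ m)
    (f : ZMod (2 * m ^ 2 + m) ≃ (⊤ : SimpleGraph (Fin (2 * m + 1))).edgeSet)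
    (hf : CyclicGood (⊤ : SimpleGraph (Fin (2 * m + 1))) f m)
    (i : ℕ) (hi1 : 1 ≤ i) (hi2 : i ≤ m) :
    (Gsub m i f).Connected ∧
    (Gsub m i f).edgeSet.ncard = 2 * m + 1 ∧
    (∀ v : Fin (2 * m + 1), ¬ (∃ c : (Gsub m i f).Walk v v, c.IsCycle) →
      ∃ w : Fin (2 * m + 1), (Gsub m i f).Adj v w ∧
        ∃ c : (Gsub m i f).Walk w w, c.IsCycle) :=
  unicyclic_structure_general m hm f hf i
end

section
/- For every integer n ≥ 3, the cyclic matching sequencibility and the matching sequencibility of the cycle C_n both equal ⌊(n-1)/2⌋: cms(C_n) = ms(C_n) = ⌊(n-1)/2⌋. -/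
/-! Label the edges of `C_n` by `ZMod n`, edge `a` joining `a` and `a + 1`, so that edges `a` and
`b` meet iff `b - a ∈ {0, 1, -1}`. Write `D = ⌊(n-1)/2⌋`.

Upper bound: if every `D + 1` consecutive edges of a linear ordering were disjoint, then among
the labels `S` of the first `D + 2` edges only the first and the last could be consecutive, so
`S ∩ (S + 1)` has at most one element and `|S ∪ (S + 1)| ≥ 2 (D + 2) - 1 > n`.

Lower bound: a cyclic ordering in which consecutive labels `a`, `a + 1` sit at positions that
are at least `D` apart in both directions has cyclic matching number `D`. For odd `n` the
positions `(n + 1) / 2 * a` do this; for even `n` a two-piece linear map does. A cyclic ordering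
is in particular a linear one with at least the same matching number. -/

theorem edgesDisjoint.symm {V : Type*} {e₁ e₂ : Sym2 V} (h : edgesDisjoint e₁ e₂) :
    edgesDisjoint e₂ e₁ :=
  fun v hv₂ hv₁ => h v hv₁ hv₂

theorem ZMod.natCast_inj_of_lt {N a b : ℕ} (ha : a < N) (hb : b < N) :
    (a : ZMod N) = b ↔ a = b := by
  refine ⟨fun h => ?_, congrArg _⟩
  simpa [ZMod.val_natCast_of_lt ha, ZMod.val_natCast_of_lt hb] using congrArg ZMod.val h

open Fin.CommRing in
theorem ZMod.finEquiv_apply {N : ℕ} [NeZero N] (p : Fin N) : ZMod.finEquiv N p = (p : ℕ) := by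
  rw [← map_natCast (ZMod.finEquiv N), Fin.cast_val_eq_self]

theorem CyclicGood.linearGood {V : Type*} {G : SimpleGraph V} [NeZero (edgeCount G)]
    {f : ZMod (edgeCount G) ≃ G.edgeSet} {d : ℕ} (hf : CyclicGood G f d) :
    LinearGood G ((ZMod.finEquiv _).toEquiv.trans f) d := by
  intro j k hjk hjd hkd
  wlog hlt : j < k generalizing j k
  · exact (this k j hjk.symm hkd hjd (lt_of_le_of_ne (not_lt.mp hlt) hjk.symm)).symm
  have hk : ZMod.finEquiv _ k = ZMod.finEquiv _ j + ((k - j : ℕ) : ZMod _) := by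
    rw [ZMod.finEquiv_apply, ZMod.finEquiv_apply, ← Nat.cast_add, Nat.add_sub_cancel' hlt.le]
  simpa [hk] using hf (ZMod.finEquiv _ j) 0 (k - j) (by omega) (by omega) (by omega)

theorem ZMod.two_mul_card_le {N : ℕ} [NeZero N] (S : Finset (ZMod N)) :
    2 * S.card ≤ N + (S ∩ S.image (· + 1)).card := by
  have hunion := Finset.card_union_add_card_inter S (S.image (· + 1))
  have himage : (S.image (· + 1)).card = S.card :=
    Finset.card_image_of_injective _ (add_left_injective 1)
  have huniv : (S ∪ S.image (· + 1)).card ≤ N := (Finset.card_le_univ _).trans_eq (ZMod.card N)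
  omega

theorem exists_equiv_steps_odd (k : ℕ) : ∃ pos : ZMod (2 * k + 1) ≃ ZMod (2 * k + 1),
    ∀ a, ∃ s, k ≤ s ∧ s + k ≤ 2 * k + 1 ∧ pos (a + 1) = pos a + s := by
  have hN : (2 * k + 1 : ZMod (2 * k + 1)) = 0 := by exact_mod_cast ZMod.natCast_self (2 * k + 1)
  refine ⟨⟨fun a => (k + 1) * a, fun a => 2 * a, fun a => ?_, fun a => ?_⟩,
    fun a => ⟨k + 1, by omega, by omega, ?_⟩⟩
  · linear_combination a * hN
  · linear_combination a * hN
  · show (k + 1) * (a + 1) = (k + 1) * a + ((k + 1 : ℕ) : ZMod (2 * k + 1))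
    push_cast; ring

/-- Steps of `k` on `0, …, k`, of `k + 2` on `k + 1, …, 2k + 1`, and of `k + 1` modulo `2k + 2`
across the two seams. -/
def evenPos (k i : ℕ) : ℕ := if i ≤ k then k * i else (k + 2) * i + 1

theorem evenPos_inj {k i j : ℕ} (hi : i < 2 * k + 2) (hj : j < 2 * k + 2)
    (h : (evenPos k i : ZMod (2 * k + 2)) = evenPos k j) : i = j := by
  wlog hij : i ≤ j generalizing i j
  · exact (this hj hi h.symm (by omega)).symm
  rw [← Int.cast_natCast, ← Int.cast_natCast (evenPos k j),
    ZMod.intCast_eq_intCast_iff_dvd_sub] at h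
  have hdvd : (k + 1 : ℤ) ∣ evenPos k j - evenPos k i :=
    (Dvd.intro_left 2 (by push_cast; ring)).trans h
  have eq_of_dvd : (k + 1 : ℤ) ∣ j - i → j ≤ i + k → i = j := fun hd hjik => by
    have := Int.eq_zero_of_abs_lt_dvd hd (abs_lt.mpr ⟨by omega, by omega⟩)
    omega
  unfold evenPos at hdvd h
  split_ifs at hdvd h with hjk hik hik
  · refine eq_of_dvd ((dvd_sub (dvd_mul_right _ (j - i : ℤ)) hdvd).trans (dvd_of_eq ?_))
      (by omega)
    push_cast; ring
  · omega
  · obtain ⟨c, hc⟩ : (k + 1 : ℤ) ∣ i + j + 1 := by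
      refine (dvd_sub hdvd (dvd_mul_right _ (j - i : ℤ))).trans (dvd_of_eq ?_)
      push_cast; ring
    obtain rfl : c = 2 := by nlinarith
    have : (2 * k + 2 : ℤ) ∣ k + 1 := by
      refine (dvd_sub h (dvd_mul_right _ (k + 1 - i : ℤ))).trans (dvd_of_eq ?_)
      push_cast
      linear_combination ((k : ℤ) + 2) * hc
    have := Int.le_of_dvd (by omega) this
    omega
  · refine eq_of_dvd ((dvd_sub hdvd (dvd_mul_right _ (j - i : ℤ))).trans (dvd_of_eq ?_))
      (by omega)
    push_cast; ring

theorem evenPos_step {k i : ℕ} (hi : i < 2 * k + 2) : ∃ s, k ≤ s ∧ s ≤ k + 2 ∧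
    (evenPos k ((i + 1) % (2 * k + 2)) : ZMod (2 * k + 2)) = evenPos k i + s := by
  have hN : (2 * k + 2 : ZMod (2 * k + 2)) = 0 := by exact_mod_cast ZMod.natCast_self (2 * k + 2)
  rcases Nat.lt_or_ge (i + 1) (2 * k + 2) with hlt | hge
  · rw [Nat.mod_eq_of_lt hlt]
    unfold evenPos
    rcases lt_trichotomy i k with hik | rfl | hik
    · refine ⟨k, le_rfl, by omega, ?_⟩
      rw [if_pos (by omega), if_pos hik.le]; push_cast; ring
    · refine ⟨i + 1, by omega, by omega, ?_⟩
      rw [if_neg (by omega), if_pos le_rfl]; push_cast; linear_combination hN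
    · refine ⟨k + 2, by omega, le_rfl, ?_⟩
      rw [if_neg (by omega), if_neg (by omega)]; push_cast; ring
  · obtain rfl : i = 2 * k + 1 := by omega
    refine ⟨k + 1, by omega, by omega, ?_⟩
    rw [Nat.mod_self]
    unfold evenPos
    rw [if_pos (by omega), if_neg (by omega)]
    push_cast
    linear_combination (-(k : ZMod (2 * k + 2)) - 2) * hN

theorem exists_equiv_steps_even (k : ℕ) : ∃ pos : ZMod (2 * k + 2) ≃ ZMod (2 * k + 2),
    ∀ a, ∃ s, k ≤ s ∧ s + k ≤ 2 * k + 2 ∧ pos (a + 1) = pos a + s := by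
  let pos (a : ZMod (2 * k + 2)) : ZMod (2 * k + 2) := evenPos k a.val
  have hinj : Function.Injective pos := fun a b h =>
    ZMod.val_injective _ (evenPos_inj (ZMod.val_lt a) (ZMod.val_lt b) h)
  refine ⟨Equiv.ofBijective pos (Finite.injective_iff_bijective.mp hinj), fun a => ?_⟩
  obtain ⟨s, hs, hs', hstep⟩ := evenPos_step (ZMod.val_lt a)
  refine ⟨s, hs, by omega, ?_⟩
  have ha : a + 1 = ((a.val + 1 : ℕ) : ZMod (2 * k + 2)) := by
    rw [Nat.cast_add, ZMod.natCast_zmod_val, Nat.cast_one]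
  show (evenPos k (a + 1).val : ZMod (2 * k + 2)) = evenPos k a.val + s
  rw [ha, ZMod.val_natCast]
  exact hstep

open SimpleGraph

section CycleGraph

variable {n : ℕ}

theorem two_ne_zero_zmod_add_three : (2 : ZMod (n + 3)) ≠ 0 := by
  have := (ZMod.natCast_inj_of_lt (N := n + 3) (a := 2) (b := 0) (by omega) (by omega)).not
  exact_mod_cast this.mpr (by omega)

theorem cycleGraph_adj_zmod {a b : ZMod (n + 3)} :
    (cycleGraph (n + 3)).Adj a b ↔ b = a + 1 ∨ a = b + 1 := by
  show a - b = 1 ∨ b - a = 1 ↔ _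
  rw [sub_eq_iff_eq_add', sub_eq_iff_eq_add', or_comm]

def cycleEdge (a : ZMod (n + 3)) : Sym2 (Fin (n + 3)) := (s(a, a + 1) : Sym2 (ZMod (n + 3)))

theorem cycleEdge_mem_edgeSet (a : ZMod (n + 3)) : cycleEdge a ∈ (cycleGraph (n + 3)).edgeSet :=
  cycleGraph_adj_zmod.mpr (.inl rfl)

theorem cycleEdge_injective : Function.Injective (cycleEdge (n := n)) := by
  intro a b h
  rcases Sym2.eq_iff.mp h with ⟨hab, -⟩ | ⟨hab, hba⟩
  · exact hab
  · have h2 : (2 : ZMod (n + 3)) = 0 := by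
      linear_combination (hba : (a + 1 : ZMod (n + 3)) = b) - (hab : a = b + 1)
    exact absurd h2 two_ne_zero_zmod_add_three

theorem exists_cycleEdge_eq {e : Sym2 (Fin (n + 3))} (he : e ∈ (cycleGraph (n + 3)).edgeSet) :
    ∃ a, cycleEdge a = e := by
  refine Sym2.ind (fun (u v : ZMod (n + 3)) he => ?_) e he
  obtain rfl | rfl := cycleGraph_adj_zmod.mp (show (cycleGraph (n + 3)).Adj u v from he)
  · exact ⟨u, rfl⟩
  · exact ⟨v, Sym2.eq_swap⟩

noncomputable def cycleEdgeEquiv : ZMod (n + 3) ≃ (cycleGraph (n + 3)).edgeSet :=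
  Equiv.ofBijective (fun a => ⟨cycleEdge a, cycleEdge_mem_edgeSet a⟩)
    ⟨fun _ _ h => cycleEdge_injective (congrArg Subtype.val h),
      fun e => (exists_cycleEdge_eq e.2).imp fun _ h => Subtype.ext h⟩

@[simp] theorem coe_cycleEdgeEquiv (a : ZMod (n + 3)) :
    (cycleEdgeEquiv a : Sym2 (Fin (n + 3))) = cycleEdge a :=
  rfl

theorem edgeCount_cycleGraph : edgeCount (cycleGraph (n + 3)) = n + 3 := by
  rw [edgeCount, ← Nat.card_congr cycleEdgeEquiv, Nat.card_zmod]

theorem edgesDisjoint_cycleEdge_iff {a b : ZMod (n + 3)} :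
    edgesDisjoint (cycleEdge a) (cycleEdge b) ↔ a ≠ b ∧ b ≠ a + 1 ∧ a ≠ b + 1 := by
  show (∀ v : ZMod (n + 3), v ∈ s(a, a + 1) → v ∉ s(b, b + 1)) ↔ _
  simp only [Sym2.mem_iff, forall_eq_or_imp, forall_eq, not_or, add_left_inj, eq_comm (a := a + 1)]
  tauto

theorem cyclicGood_cycleGraph_of_steps (pos : ZMod (n + 3) ≃ ZMod (n + 3)) {d : ℕ}
    (hpos : ∀ a, ∃ s, d ≤ s ∧ s + d ≤ n + 3 ∧ pos (a + 1) = pos a + s) :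
    CyclicGood (cycleGraph (n + 3)) (pos.symm.trans cycleEdgeEquiv) d := by
  obtain ⟨s₀, hs₀, hs₀', -⟩ := hpos 0
  have hsucc : ∀ (i : ZMod (n + 3)) (j k : ℕ), j < d → k < d →
      pos.symm (i + k) ≠ pos.symm (i + j) + 1 := by
    intro i j k hj hk h
    obtain ⟨s, hs, hs', hstep⟩ := hpos (pos.symm (i + j))
    rw [← h, Equiv.apply_symm_apply, Equiv.apply_symm_apply, add_assoc, add_right_inj,
      ← Nat.cast_add, ZMod.natCast_inj_of_lt (by omega) (by omega)] at hstep
    omega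
  intro i j k hj hk hjk
  simp only [Equiv.trans_apply, coe_cycleEdgeEquiv, edgesDisjoint_cycleEdge_iff]
  refine ⟨fun h => hjk ?_, hsucc i j k hj hk, hsucc i k j hk hj⟩
  rwa [pos.symm.injective.eq_iff, add_right_inj,
    ZMod.natCast_inj_of_lt (by omega) (by omega)] at h

theorem exists_cyclicGood_cycleGraph (n : ℕ) :
    ∃ f : ZMod (edgeCount (cycleGraph (n + 3))) ≃ (cycleGraph (n + 3)).edgeSet,
      CyclicGood (cycleGraph (n + 3)) f ((n + 2) / 2) := by
  rw [edgeCount_cycleGraph]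
  obtain ⟨pos, hpos⟩ : ∃ pos : ZMod (n + 3) ≃ ZMod (n + 3),
      ∀ a, ∃ s, (n + 2) / 2 ≤ s ∧ s + (n + 2) / 2 ≤ n + 3 ∧ pos (a + 1) = pos a + s := by
    obtain ⟨k, rfl | rfl⟩ := Nat.even_or_odd' n
    · rw [show 2 * k + 3 = 2 * (k + 1) + 1 by ring, show (2 * k + 2) / 2 = k + 1 by omega]
      exact exists_equiv_steps_odd (k + 1)
    · rw [show 2 * k + 1 + 3 = 2 * (k + 1) + 2 by ring,
        show (2 * k + 1 + 2) / 2 = k + 1 by omega]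
      exact exists_equiv_steps_even (k + 1)
  exact ⟨_, cyclicGood_cycleGraph_of_steps pos hpos⟩

theorem two_mul_add_three_le_of_succ_only_at_ends {m : ℕ} {g : Fin (m + 2) → ZMod (n + 3)}
    (hg : Function.Injective g)
    (hends : ∀ p q, g q = g p + 1 → p = 0 ∧ q = Fin.last _ ∨ p = Fin.last _ ∧ q = 0) :
    2 * m + 3 ≤ n + 3 := by
  set S := Finset.univ.image g
  have hS : S.card = m + 2 := by
    rw [Finset.card_image_of_injective _ hg, Finset.card_univ, Fintype.card_fin]
  have hsucc : ∀ y ∈ S ∩ S.image (· + 1), ∃ p q, g q = g p + 1 ∧ y = g q := by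
    intro y hy
    obtain ⟨hyS, hy1⟩ := Finset.mem_inter.mp hy
    obtain ⟨q, -, rfl⟩ := Finset.mem_image.mp hyS
    obtain ⟨x, hx, hxq⟩ := Finset.mem_image.mp hy1
    obtain ⟨p, -, rfl⟩ := Finset.mem_image.mp hx
    exact ⟨p, q, hxq.symm, rfl⟩
  have hT : (S ∩ S.image (· + 1)).card ≤ 1 := by
    refine Finset.card_le_one.mpr fun a ha b hb => ?_
    obtain ⟨p, q, hpq, rfl⟩ := hsucc a ha
    obtain ⟨p', q', hpq', rfl⟩ := hsucc b hb
    rcases hends p q hpq with ⟨rfl, rfl⟩ | ⟨rfl, rfl⟩ <;>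
      rcases hends p' q' hpq' with ⟨rfl, rfl⟩ | ⟨rfl, rfl⟩
    all_goals first
      | rfl
      | exact absurd (by linear_combination -hpq - hpq') two_ne_zero_zmod_add_three
  have := ZMod.two_mul_card_le S
  omega

theorem LinearGood.le_of_cycleGraph
    {f : Fin (edgeCount (cycleGraph (n + 3))) ≃ (cycleGraph (n + 3)).edgeSet} {d : ℕ}
    (hf : LinearGood (cycleGraph (n + 3)) f d) : d ≤ (n + 2) / 2 := by
  by_contra! hd
  have hle : (n + 2) / 2 + 2 ≤ edgeCount (cycleGraph (n + 3)) := by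
    rw [edgeCount_cycleGraph]; omega
  set e := Fin.castLE hle
  set g := fun p => cycleEdgeEquiv.symm (f (e p))
  have hfg : ∀ p, (f (e p) : Sym2 (Fin (n + 3))) = cycleEdge (g p) := fun p => by
    rw [← coe_cycleEdgeEquiv, Equiv.apply_symm_apply]
  have hg : Function.Injective g :=
    cycleEdgeEquiv.symm.injective.comp (f.injective.comp (Fin.castLE_injective hle))
  refine absurd (two_mul_add_three_le_of_succ_only_at_ends hg fun p q hpq => ?_) (by omega)
  have hne : p ≠ q := by
    rintro rfl
    have : Fact (1 < n + 3) := ⟨by omega⟩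
    simp at hpq
  have hmeet : ¬ edgesDisjoint (f (e p) : Sym2 (Fin (n + 3))) (f (e q)) := by
    rw [hfg, hfg, edgesDisjoint_cycleEdge_iff]
    exact fun h => h.2.1 hpq
  have hfar : ¬ ((e p : ℕ) < e q + d ∧ (e q : ℕ) < e p + d) := fun ⟨h₁, h₂⟩ =>
    hmeet (hf (e p) (e q) ((Fin.castLE_injective hle).ne hne) h₁ h₂)
  simp only [Fin.ext_iff, Fin.val_last, Fin.val_zero, e, Fin.val_castLE] at hfar hne ⊢
  omega

end CycleGraph

/-- For every integer `n ≥ 3`,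
`cms (C_n) = ms (C_n) = ⌊(n-1)/2⌋`. -/
theorem cms_ms_cycleGraph (n : ℕ) (hn : 3 ≤ n) :
    cms (SimpleGraph.cycleGraph n) = (n - 1) / 2 ∧
    ms (SimpleGraph.cycleGraph n) = (n - 1) / 2 := by
  obtain ⟨n, rfl⟩ := Nat.exists_eq_add_of_le' hn
  obtain ⟨f, hf⟩ := exists_cyclicGood_cycleGraph n
  have : NeZero (edgeCount (cycleGraph (n + 3))) := ⟨by rw [edgeCount_cycleGraph]; omega⟩
  constructor
  · exact IsGreatest.csSup_eq ⟨⟨f, hf⟩, fun _ ⟨_, hg⟩ => hg.linearGood.le_of_cycleGraph⟩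
  · exact IsGreatest.csSup_eq ⟨⟨by rw [edgeCount_cycleGraph]; omega, _, hf.linearGood⟩,
      fun _ ⟨_, _, hg⟩ => hg.le_of_cycleGraph⟩
end

section
/- For every odd integer n ≥ 3, the matching sequencibility of the path P_n on n vertices equals (n-1)/2: ms(P_n) = (n-1)/2. -/
open SimpleGraph

def pathEdge (n : ℕ) (i : Fin (n-1)) : (pathGraph n).edgeSet :=
  ⟨s(⟨(i:ℕ), i.isLt.trans_le (Nat.sub_le n 1)⟩, ⟨(i:ℕ)+1, by have := i.isLt; omega⟩), by
    rw [SimpleGraph.mem_edgeSet, SimpleGraph.pathGraph_adj]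
    left; rfl⟩

lemma pathEdge_bij (n : ℕ) : Function.Bijective (pathEdge n) := by
  constructor
  · intro a b hab
    have h := congrArg Subtype.val hab
    simp only [pathEdge, Sym2.eq_iff, Fin.mk.injEq] at h
    apply Fin.ext
    omega
  · rintro ⟨e, he⟩
    induction e using Sym2.ind with
    | _ u v =>
      rw [SimpleGraph.mem_edgeSet, SimpleGraph.pathGraph_adj] at he
      rcases he with h | h
      · refine ⟨⟨(u:ℕ), by have := v.isLt; omega⟩, Subtype.ext ?_⟩
        simp only [pathEdge, Sym2.eq_iff, Fin.ext_iff]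
        simp [h]
      · refine ⟨⟨(v:ℕ), by have := u.isLt; omega⟩, Subtype.ext ?_⟩
        simp only [pathEdge, Sym2.eq_iff, Fin.ext_iff]
        simp [h]

noncomputable def pathEquiv (n : ℕ) : Fin (n-1) ≃ (pathGraph n).edgeSet :=
  Equiv.ofBijective (pathEdge n) (pathEdge_bij n)

lemma edgeCount_pathGraph (n : ℕ) : edgeCount (pathGraph n) = n - 1 := by
  unfold edgeCount
  rw [Nat.card_congr (pathEquiv n).symm, Nat.card_eq_fintype_card, Fintype.card_fin]

lemma mem_pathEquiv (n : ℕ) (i : Fin (n-1)) (v : Fin n) :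
    v ∈ (pathEquiv n i : Sym2 (Fin n)) ↔ (v:ℕ) = (i:ℕ) ∨ (v:ℕ) = (i:ℕ)+1 := by
  simp [pathEquiv, pathEdge, Sym2.mem_iff, Fin.ext_iff]

lemma pathEquiv_disj {n : ℕ} {i j : Fin (n-1)} (h : (i:ℕ)+2 ≤ (j:ℕ) ∨ (j:ℕ)+2 ≤ (i:ℕ)) :
    edgesDisjoint (pathEquiv n i : Sym2 (Fin n)) (pathEquiv n j : Sym2 (Fin n)) := by
  intro v hv hv'
  rw [mem_pathEquiv] at hv hv'
  omega

lemma pathEquiv_disj' {n : ℕ} {i j : Fin (n-1)}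
    (h : edgesDisjoint (pathEquiv n i : Sym2 (Fin n)) (pathEquiv n j : Sym2 (Fin n))) :
    (i:ℕ)+2 ≤ (j:ℕ) ∨ (j:ℕ)+2 ≤ (i:ℕ) := by
  by_contra hc
  push_neg at hc
  have hi := i.isLt
  have hj := j.isLt
  rcases (show (i:ℕ) = (j:ℕ) ∨ (i:ℕ) = (j:ℕ)+1 ∨ (i:ℕ)+1 = (j:ℕ) by omega) with h1 | h1 | h1
  · exact h ⟨(i:ℕ), by omega⟩ ((mem_pathEquiv n i _).mpr (Or.inl rfl))
      ((mem_pathEquiv n j _).mpr (Or.inl h1))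
  · exact h ⟨(i:ℕ), by omega⟩ ((mem_pathEquiv n i _).mpr (Or.inl rfl))
      ((mem_pathEquiv n j _).mpr (Or.inr h1))
  · exact h ⟨(i:ℕ)+1, by omega⟩ ((mem_pathEquiv n i _).mpr (Or.inr rfl))
      ((mem_pathEquiv n j _).mpr (Or.inl h1))

noncomputable def ordEquiv (k : ℕ) : Fin (2*k) ≃ Fin (2*k) :=
  Equiv.ofBijective
    (fun j => ⟨if (j:ℕ) < k then 2*(j:ℕ)+1 else 2*((j:ℕ)-k), by have := j.isLt; split <;> omega⟩)
    (Finite.injective_iff_bijective.mp (by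
      intro a b hab
      have h := congrArg Fin.val hab
      simp only at h
      have ha := a.isLt; have hb := b.isLt
      apply Fin.ext
      split_ifs at h <;> omega))

lemma ordEquiv_apply (k : ℕ) (j : Fin (2*k)) :
    ((ordEquiv k j : Fin (2*k)) : ℕ) = if (j:ℕ) < k then 2*(j:ℕ)+1 else 2*((j:ℕ)-k) := rfl

/-- For every odd integer `n ≥ 3`, `ms (P_n) = (n-1)/2`. -/
theorem ms_pathGraph_odd (n : ℕ) (hn : 3 ≤ n) (hpar : Odd n) :
    ms (SimpleGraph.pathGraph n) = (n - 1) / 2 := by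
  obtain ⟨k, hk⟩ := hpar
  have hk1 : 1 ≤ k := by omega
  have hc : edgeCount (pathGraph n) = n - 1 := edgeCount_pathGraph n
  have h2 : n - 1 = 2 * k := by omega
  let inner : Fin (n-1) ≃ Fin (n-1) := (finCongr h2).trans ((ordEquiv k).trans (finCongr h2.symm))
  let f : Fin (edgeCount (pathGraph n)) ≃ (pathGraph n).edgeSet :=
    (finCongr hc).trans (inner.trans (pathEquiv n))
  have hinner : ∀ j : Fin (n-1),
      ((inner j : Fin (n-1)) : ℕ) = if (j:ℕ) < k then 2*(j:ℕ)+1 else 2*((j:ℕ)-k) := by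
    intro j
    simp only [inner, Equiv.trans_apply, finCongr_apply, Fin.coe_cast, ordEquiv_apply]
  have hgood : LinearGood (pathGraph n) f k := by
    intro a b hab ha1 hb1
    have e1 : (f a : Sym2 (Fin n)) = (pathEquiv n (inner (finCongr hc a)) : Sym2 (Fin n)) := rfl
    have e2 : (f b : Sym2 (Fin n)) = (pathEquiv n (inner (finCongr hc b)) : Sym2 (Fin n)) := rfl
    rw [e1, e2]
    apply pathEquiv_disj
    rw [hinner, hinner]
    have ca : ((finCongr hc a : Fin (n-1)) : ℕ) = (a:ℕ) := rfl
    have cb : ((finCongr hc b : Fin (n-1)) : ℕ) = (b:ℕ) := rfl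
    rw [ca, cb]
    have hab' : (a:ℕ) ≠ (b:ℕ) := fun h => hab (Fin.ext h)
    have := a.isLt
    have := b.isLt
    split_ifs <;> omega
  have hmem : k ∈ {d : ℕ | d ≤ edgeCount (pathGraph n) ∧
      ∃ f : Fin (edgeCount (pathGraph n)) ≃ (pathGraph n).edgeSet, LinearGood (pathGraph n) f d} :=
    ⟨by omega, f, hgood⟩
  have hub : ∀ d ∈ {d : ℕ | d ≤ edgeCount (pathGraph n) ∧
      ∃ f : Fin (edgeCount (pathGraph n)) ≃ (pathGraph n).edgeSet, LinearGood (pathGraph n) f d},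
      d ≤ k := by
    rintro d ⟨hd1, g, hg⟩
    by_contra hdk
    push_neg at hdk
    have hlt : ∀ t : Fin (k+1), (t:ℕ) < edgeCount (pathGraph n) := by
      intro t; have := t.isLt; omega
    let ι : Fin (k+1) → ℕ := fun t => (((pathEquiv n).symm (g ⟨(t:ℕ), hlt t⟩) : Fin (n-1)) : ℕ)
    have hιlt : ∀ t : Fin (k+1), ι t < n - 1 := fun t =>
      (((pathEquiv n).symm (g ⟨(t:ℕ), hlt t⟩)).isLt)
    have hdisj : ∀ s t : Fin (k+1), s ≠ t → ι s + 2 ≤ ι t ∨ ι t + 2 ≤ ι s := by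
      intro s t hst
      show (((pathEquiv n).symm (g ⟨(s:ℕ), hlt s⟩) : Fin (n-1)) : ℕ) + 2 ≤
          (((pathEquiv n).symm (g ⟨(t:ℕ), hlt t⟩) : Fin (n-1)) : ℕ) ∨
          (((pathEquiv n).symm (g ⟨(t:ℕ), hlt t⟩) : Fin (n-1)) : ℕ) + 2 ≤
          (((pathEquiv n).symm (g ⟨(s:ℕ), hlt s⟩) : Fin (n-1)) : ℕ)
      apply pathEquiv_disj'
      have hne : (⟨(s:ℕ), hlt s⟩ : Fin (edgeCount (pathGraph n))) ≠ ⟨(t:ℕ), hlt t⟩ := by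
        intro h
        rw [Fin.mk.injEq] at h
        exact hst (Fin.ext h)
      have hw := hg ⟨(s:ℕ), hlt s⟩ ⟨(t:ℕ), hlt t⟩ hne
        (by show (s:ℕ) < (t:ℕ) + d; have := s.isLt; have := t.isLt; omega)
        (by show (t:ℕ) < (s:ℕ) + d; have := s.isLt; have := t.isLt; omega)
      simpa [Equiv.apply_symm_apply] using hw
    let F : Fin (k+1) → Fin k := fun t => ⟨ι t / 2, by have := hιlt t; omega⟩
    have hF : Function.Injective F := by
      intro s t hst
      by_contra hne
      have h1 := hdisj s t hne
      have hF2 : ι s / 2 = ι t / 2 := congrArg Fin.val hst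
      omega
    have hcard := Fintype.card_le_of_injective F hF
    simp only [Fintype.card_fin] at hcard
    omega
  have hms : ms (pathGraph n) = k := by
    apply le_antisymm
    · exact csSup_le ⟨k, hmem⟩ hub
    · exact le_csSup ⟨edgeCount (pathGraph n), fun d hd => hd.1⟩ hmem
  rw [hms]
  omega
end

section
/- For every odd integer n ≥ 5, the cyclic matching sequencibility of the path P_n on n vertices equals (n-3)/2: cms(P_n) = (n-3)/2. In particular, there is no cyclic ordering of the n - 1 edges of P_n in which every (n-1)/2 cyclically consecutive edges are pairwise disjoint. -/
namespace CMSAux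

/-- The `i`-th edge of the path graph. -/
def pathEdge (n : ℕ) (i : Fin (n - 1)) : (SimpleGraph.pathGraph n).edgeSet :=
  ⟨s(⟨i.val, by have := i.isLt; omega⟩, ⟨i.val + 1, by have := i.isLt; omega⟩), by
    rw [SimpleGraph.mem_edgeSet, SimpleGraph.pathGraph_adj]; left; rfl⟩

lemma pathEdge_bij (n : ℕ) : Function.Bijective (pathEdge n) := by
  constructor
  · intro a b hab
    have h := congrArg Subtype.val hab
    simp only [pathEdge, Sym2.eq_iff, Fin.mk.injEq] at h
    exact Fin.ext (by omega)
  · rintro ⟨e, he⟩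
    induction e with
    | _ u v =>
      rw [SimpleGraph.mem_edgeSet, SimpleGraph.pathGraph_adj] at he
      have hu := u.isLt; have hv := v.isLt
      rcases he with h | h
      · refine ⟨⟨u.val, by omega⟩, Subtype.ext ?_⟩
        simp only [pathEdge, Sym2.eq_iff, Fin.ext_iff]
        left; simp [h]
      · refine ⟨⟨v.val, by omega⟩, Subtype.ext ?_⟩
        simp only [pathEdge, Sym2.eq_iff, Fin.ext_iff]
        right; simp [h]

/-- Explicit enumeration of the edges of the path graph. -/
noncomputable def pathEquiv (n : ℕ) : Fin (n - 1) ≃ (SimpleGraph.pathGraph n).edgeSet :=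
  Equiv.ofBijective (pathEdge n) (pathEdge_bij n)

lemma edgeCount_path (n : ℕ) : edgeCount (SimpleGraph.pathGraph n) = n - 1 := by
  rw [edgeCount, Nat.card_congr (pathEquiv n).symm, Nat.card_eq_fintype_card, Fintype.card_fin]

lemma disj_of_gap {n : ℕ} (a b : Fin (n - 1)) (h : a.val + 2 ≤ b.val ∨ b.val + 2 ≤ a.val) :
    edgesDisjoint ((pathEdge n a : (SimpleGraph.pathGraph n).edgeSet) : Sym2 (Fin n))
      ((pathEdge n b : (SimpleGraph.pathGraph n).edgeSet) : Sym2 (Fin n)) := by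
  intro v hv hv'
  simp only [pathEdge, Sym2.mem_iff] at hv hv'
  rcases hv with rfl | rfl <;> rcases hv' with hv' | hv' <;>
    (have := congrArg Fin.val hv'; simp at this; omega)

lemma gap_of_disj {n : ℕ} (a b : Fin (n - 1))
    (hd : edgesDisjoint ((pathEdge n a : (SimpleGraph.pathGraph n).edgeSet) : Sym2 (Fin n))
      ((pathEdge n b : (SimpleGraph.pathGraph n).edgeSet) : Sym2 (Fin n))) :
    a.val + 2 ≤ b.val ∨ b.val + 2 ≤ a.val := by
  by_contra hng
  push_neg at hng
  have ha := a.isLt; have hb := b.isLt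
  rcases le_or_gt a.val b.val with h | h
  · exact hd ⟨b.val, by omega⟩
      (by simp only [pathEdge, Sym2.mem_iff, Fin.mk.injEq]; first | exact Or.inl trivial | omega)
      (by simp only [pathEdge, Sym2.mem_iff, Fin.mk.injEq]; first | exact Or.inl trivial | omega)
  · exact hd ⟨a.val, by omega⟩
      (by simp only [pathEdge, Sym2.mem_iff, Fin.mk.injEq]; first | exact Or.inl trivial | omega)
      (by simp only [pathEdge, Sym2.mem_iff, Fin.mk.injEq]; first | exact Or.inl trivial | omega)

end CMSAux
namespace CMSAux

lemma cast_inj_of_lt {m : ℕ} [NeZero m] {r r' : ℕ} (hr : r < m) (hr' : r' < m)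
    (h : (r : ZMod m) = (r' : ZMod m)) : r = r' := by
  rw [← ZMod.val_cast_of_lt hr, ← ZMod.val_cast_of_lt hr', h]

lemma no_cyclic (m k : ℕ) (hm : m = 2 * k) (hk : 2 ≤ k) (g : ZMod m ≃ Fin m)
    (hg : ∀ (i : ZMod m) (r r' : ℕ), r < k → r' < k → r ≠ r' →
      (g (i + (r : ℕ))).val + 1 ≠ (g (i + (r' : ℕ))).val) : False := by
  haveI : NeZero m := ⟨by omega⟩
  set W : ZMod m → Finset ℕ := fun i => (Finset.range k).image fun r => (g (i + (r : ℕ))).val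
    with hW
  have memW : ∀ (i : ZMod m) (q : ℕ), q ∈ W i ↔ ∃ r < k, (g (i + (r : ℕ))).val = q := by
    intro i q
    rw [hW]
    simp only [Finset.mem_image, Finset.mem_range]
  -- no two adjacent indices in a window
  have hadj : ∀ (i : ZMod m) (q : ℕ), q ∈ W i → q + 1 ∈ W i → False := by
    intro i q h1 h2
    rw [memW] at h1 h2
    obtain ⟨r, hr, hrq⟩ := h1
    obtain ⟨r', hr', hrq'⟩ := h2
    rcases eq_or_ne r r' with rfl | hne
    · omega
    · exact hg i r r' hr hr' hne (by omega)
  have hWlt : ∀ (i : ZMod m) (q : ℕ), q ∈ W i → q < m := by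
    intro i q h; rw [memW] at h; obtain ⟨r, hr, hrq⟩ := h
    exact hrq ▸ (g (i + (r : ℕ))).isLt
  have hcardW : ∀ i : ZMod m, (W i).card = k := by
    intro i
    rw [hW]
    rw [Finset.card_image_of_injOn, Finset.card_range]
    intro r hr r' hr' hvals
    simp only [Finset.mem_coe, Finset.mem_range] at hr hr'
    have h1 : g (i + (r : ℕ)) = g (i + (r' : ℕ)) := Fin.ext (by simpa using hvals)
    have h2 : i + (r : ℕ) = i + (r' : ℕ) := g.injective h1
    exact cast_inj_of_lt (by omega) (by omega) (add_left_cancel h2)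
  -- each pair {2p, 2p+1} is hit
  have hhalf : ∀ i : ZMod m, (W i).image (fun q => q / 2) = Finset.range k := by
    intro i
    apply Finset.eq_of_subset_of_card_le
    · intro p hp
      simp only [Finset.mem_image] at hp
      obtain ⟨q, hq, rfl⟩ := hp
      have := hWlt i q hq
      simp only [Finset.mem_range]; omega
    · rw [Finset.card_range, Finset.card_image_of_injOn, hcardW]
      intro q hq q' hq' hdiv
      have hdiv' : q / 2 = q' / 2 := by simpa using hdiv
      rcases Nat.lt_trichotomy q q' with h | h | h
      · exfalso; have : q' = q + 1 := by omega
        exact hadj i q hq (this ▸ hq')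
      · exact h
      · exfalso; have : q = q' + 1 := by omega
        exact hadj i q' hq' (this ▸ hq)
  have hF1 : ∀ (i : ZMod m) (p : ℕ), p < k → (2 * p ∈ W i ∨ 2 * p + 1 ∈ W i) := by
    intro i p hp
    have : p ∈ (W i).image (fun q => q / 2) := by
      rw [hhalf]; simpa using hp
    simp only [Finset.mem_image] at this
    obtain ⟨q, hq, hq2⟩ := this
    have : q = 2 * p ∨ q = 2 * p + 1 := by omega
    rcases this with rfl | rfl
    · left; exact hq
    · right; exact hq
  have hmono : ∀ (i : ZMod m) (p : ℕ), p + 1 < k → 2 * (p + 1) ∈ W i → 2 * p ∈ W i := by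
    intro i p hp h
    rcases hF1 i p (by omega) with h0 | h1
    · exact h0
    · exact absurd h (fun h' => hadj i (2 * p + 1) h1 (by
        have he : 2 * p + 1 + 1 = 2 * (p + 1) := by ring
        rw [he]; exact h'))
  -- counting: each edge index lies in exactly k windows
  have hcount : ∀ q : ℕ, (hq : q < m) →
      (Finset.univ.filter (fun i : ZMod m => q ∈ W i)).card = k := by
    intro q hq
    set j := g.symm ⟨q, hq⟩ with hj
    have hmem : ∀ i : ZMod m, q ∈ W i ↔ ∃ r < k, i = j - (r : ℕ) := by
      intro i
      rw [memW]
      constructor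
      · rintro ⟨r, hr, hval⟩
        refine ⟨r, hr, ?_⟩
        have h1 : g (i + (r : ℕ)) = ⟨q, hq⟩ := Fin.ext hval
        have h2 : i + (r : ℕ) = j := by rw [hj, ← h1, Equiv.symm_apply_apply]
        rw [← h2]; ring
      · rintro ⟨r, hr, rfl⟩
        refine ⟨r, hr, ?_⟩
        have h2 : j - (r : ℕ) + (r : ℕ) = j := by ring
        rw [h2, hj, Equiv.apply_symm_apply]
    have hset : Finset.univ.filter (fun i : ZMod m => q ∈ W i)
        = (Finset.range k).image (fun r : ℕ => j - (r : ℕ)) := by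
      ext i
      simp only [Finset.mem_filter, Finset.mem_univ, true_and, Finset.mem_image,
        Finset.mem_range, hmem]
      constructor
      · rintro ⟨r, hr, rfl⟩; exact ⟨r, hr, rfl⟩
      · rintro ⟨r, hr, rfl⟩; exact ⟨r, hr, rfl⟩
    rw [hset, Finset.card_image_of_injOn, Finset.card_range]
    intro r hr r' hr' hval
    simp only [Finset.mem_coe, Finset.mem_range] at hr hr'
    have : (r : ZMod m) = (r' : ZMod m) := by
      have := sub_right_inj.mp hval
      exact this
    exact cast_inj_of_lt (by omega) (by omega) this
  -- the filters for X p all coincide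
  have hfilters : ∀ p : ℕ, p < k →
      Finset.univ.filter (fun i : ZMod m => 2 * p ∈ W i)
        = Finset.univ.filter (fun i : ZMod m => 0 ∈ W i) := by
    intro p
    induction p with
    | zero => intro _; norm_num
    | succ p ih =>
      intro hp
      have hsub : Finset.univ.filter (fun i : ZMod m => 2 * (p + 1) ∈ W i)
          ⊆ Finset.univ.filter (fun i : ZMod m => 2 * p ∈ W i) := by
        intro i hi
        simp only [Finset.mem_filter, Finset.mem_univ, true_and] at hi ⊢
        exact hmono i p hp hi
      have heq := Finset.eq_of_subset_of_card_le hsub (by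
        rw [hcount (2 * p) (by omega), hcount (2 * (p + 1)) (by omega)])
      rw [heq]
      exact ih (by omega)
  have hXiff : ∀ (p : ℕ), p < k → ∀ i : ZMod m, (2 * p ∈ W i ↔ 0 ∈ W i) := by
    intro p hp i
    have := hfilters p hp
    constructor
    · intro h
      have : i ∈ Finset.univ.filter (fun i : ZMod m => 0 ∈ W i) := by
        rw [← hfilters p hp]; simp [h]
      simpa using this
    · intro h
      have : i ∈ Finset.univ.filter (fun i : ZMod m => 2 * p ∈ W i) := by
        rw [hfilters p hp]; simp [h]
      simpa using this
  have hodd : ∀ (i : ZMod m) (p : ℕ), p < k → (2 * p + 1 ∈ W i) → ¬ (0 ∈ W i) := by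
    intro i p hp h h0
    exact hadj i (2 * p) ((hXiff p hp i).mpr h0) h
  -- parity is constant between consecutive windows
  have hstep : ∀ i : ZMod m, (0 ∈ W i) ↔ (0 ∈ W (i + 1)) := by
    intro i
    have hq1 : (g (i + (1 : ℕ))).val ∈ W i := by
      rw [memW]; exact ⟨1, by omega, rfl⟩
    have hq2 : (g (i + (1 : ℕ))).val ∈ W (i + 1) := by
      rw [memW]; exact ⟨0, by omega, by norm_num⟩
    set q := (g (i + (1 : ℕ))).val with hqdef
    have hqm : q < m := (g (i + (1 : ℕ))).isLt
    rcases Nat.even_or_odd q with ⟨p, hp⟩ | ⟨p, hp⟩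
    · have hq : q = 2 * p := by omega
      have hpk : p < k := by omega
      rw [hq] at hq1 hq2
      exact iff_of_true ((hXiff p hpk i).mp hq1) ((hXiff p hpk (i + 1)).mp hq2)
    · have hq : q = 2 * p + 1 := by omega
      have hpk : p < k := by omega
      rw [hq] at hq1 hq2
      exact iff_of_false (hodd i p hpk hq1) (hodd (i + 1) p hpk hq2)
  have hshift : ∀ (i : ZMod m) (r : ℕ), (0 ∈ W (i + (r : ℕ))) ↔ 0 ∈ W i := by
    intro i r
    induction r with
    | zero => norm_num
    | succ r ih =>
      have : i + ((r + 1 : ℕ) : ZMod m) = (i + (r : ℕ)) + 1 := by push_cast; ring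
      rw [this, ← hstep (i + (r : ℕ))]
      exact ih
  have hall : ∀ i i' : ZMod m, 0 ∈ W i → 0 ∈ W i' := by
    intro i i' h
    have he : i + (((i' - i).val : ℕ) : ZMod m) = i' := by
      rw [ZMod.natCast_zmod_val]; ring
    rw [← he, hshift]; exact h
  -- conclusion
  have h0 : ∃ i : ZMod m, 0 ∈ W i := by
    have := hcount 0 (by omega)
    have hpos : 0 < (Finset.univ.filter (fun i : ZMod m => 0 ∈ W i)).card := by omega
    obtain ⟨i, hi⟩ := Finset.card_pos.mp hpos
    exact ⟨i, (Finset.mem_filter.mp hi).2⟩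
  have h1 : ∃ i : ZMod m, 1 ∈ W i := by
    have := hcount 1 (by omega)
    have hpos : 0 < (Finset.univ.filter (fun i : ZMod m => 1 ∈ W i)).card := by omega
    obtain ⟨i, hi⟩ := Finset.card_pos.mp hpos
    exact ⟨i, (Finset.mem_filter.mp hi).2⟩
  obtain ⟨i0, hi0⟩ := h0
  obtain ⟨i1, hi1⟩ := h1
  have : 2 * 0 + 1 ∈ W i1 := by norm_num; exact hi1
  exact hodd i1 0 (by omega) this (hall i0 i1 hi0)

end CMSAux
namespace CMSAux

/-- `ZMod m ≃ Fin m`. -/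
def zmodFin (m : ℕ) [NeZero m] : ZMod m ≃ Fin m where
  toFun x := ⟨x.val, x.val_lt⟩
  invFun q := (q.val : ZMod m)
  left_inv x := by simp [ZMod.natCast_zmod_val]
  right_inv q := by apply Fin.ext; simp [ZMod.val_cast_of_lt q.isLt]

/-- The "evens then odds" permutation of `Fin m`, `m = 2k`. -/
def unfoldPerm (m k : ℕ) (hm : m = 2 * k) : Fin m ≃ Fin m where
  toFun p := if h : p.val < k then ⟨2 * p.val, by omega⟩
    else ⟨2 * (p.val - k) + 1, by have := p.isLt; omega⟩
  invFun q := if h : q.val % 2 = 0 then ⟨q.val / 2, by have := q.isLt; omega⟩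
    else ⟨k + q.val / 2, by have := q.isLt; omega⟩
  left_inv p := by
    have hp := p.isLt
    apply Fin.ext
    dsimp only
    split_ifs with h1 h2 h3
    · have h2' : (2 * p.val) % 2 = 0 := h2
      show (2 * p.val) / 2 = p.val
      omega
    · have h2' : ¬ (2 * p.val) % 2 = 0 := h2
      exact absurd (by omega : (2 * p.val) % 2 = 0) h2'
    · have h3' : (2 * (p.val - k) + 1) % 2 = 0 := h3
      exact absurd h3' (by omega)
    · show k + (2 * (p.val - k) + 1) / 2 = p.val
      omega
  right_inv q := by
    have hq := q.isLt
    apply Fin.ext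
    dsimp only
    split_ifs with h1 h2 h3
    · show 2 * (q.val / 2) = q.val
      omega
    · have h2' : ¬ q.val / 2 < k := h2
      exact absurd (by omega : q.val / 2 < k) h2'
    · have h3' : k + q.val / 2 < k := h3
      exact absurd h3' (by omega)
    · show 2 * (k + q.val / 2 - k) + 1 = q.val
      omega

lemma mod_split {m : ℕ} (s t : ℕ) (hs : s < m) (ht : t < m) :
    ((s + t) % m = s + t ∧ s + t < m) ∨ ((s + t) % m = s + t - m ∧ m ≤ s + t ∧ s + t - m < m)
    := by
  rcases lt_or_ge (s + t) m with h | h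
  · exact Or.inl ⟨Nat.mod_eq_of_lt h, h⟩
  · refine Or.inr ⟨?_, h, by omega⟩
    rw [Nat.mod_eq_sub_mod h, Nat.mod_eq_of_lt (by omega)]

lemma lower_good (n m k : ℕ) (hm : m = 2 * k) (hk : 2 ≤ k) (hn : n - 1 = m) :
    ∃ f : ZMod m ≃ (SimpleGraph.pathGraph n).edgeSet,
      CyclicGood (SimpleGraph.pathGraph n) f (k - 1) := by
  haveI : NeZero m := ⟨by omega⟩
  refine ⟨((zmodFin m).trans (unfoldPerm m k hm)).trans
    ((finCongr hn.symm).trans (pathEquiv n)), ?_⟩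
  intro i j j' hj hj' hne
  have hiv := i.val_lt
  have key : ∀ t : ℕ, t < m → ∃ p : ℕ, p = (i.val + t) % m ∧ p < m ∧
      (((finCongr hn.symm) ((unfoldPerm m k hm) ((zmodFin m) (i + (t : ℕ))))) : Fin (n-1)).val
        = (if p < k then 2 * p else 2 * (p - k) + 1) := by
    intro t ht
    refine ⟨(i.val + t) % m, rfl, Nat.mod_lt _ (by omega), ?_⟩
    have hx : ((zmodFin m) (i + (t : ℕ))).val = (i.val + t) % m := by
      show (i + (t : ℕ)).val = _
      rw [ZMod.val_add, ZMod.val_natCast]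
      conv_lhs => rw [← Nat.mod_eq_of_lt hiv]
      rw [← Nat.add_mod]
    rw [finCongr_apply, Fin.coe_cast]
    set y := (zmodFin m) (i + (t : ℕ)) with hy
    rcases Nat.lt_or_ge ((i.val + t) % m) k with h | h
    · rw [if_pos h]
      show (dite _ _ _ : Fin m).val = _
      rw [dif_pos (show y.val < k by rw [hx]; exact h)]
      show 2 * y.val = _
      rw [hx]
    · rw [if_neg (by omega)]
      show (dite _ _ _ : Fin m).val = _
      rw [dif_neg (show ¬ y.val < k by rw [hx]; omega)]
      show 2 * (y.val - k) + 1 = _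
      rw [hx]
  simp only [Equiv.trans_apply, pathEquiv, Equiv.ofBijective_apply]
  apply disj_of_gap
  obtain ⟨p1, hp1, hp1m, hv1⟩ := key j (by omega)
  obtain ⟨p2, hp2, hp2m, hv2⟩ := key j' (by omega)
  rw [hv1, hv2]
  rcases mod_split i.val j hiv (by omega) with ⟨he1, hl1⟩ | ⟨he1, hl1, _⟩ <;>
    rcases mod_split i.val j' hiv (by omega) with ⟨he2, hl2⟩ | ⟨he2, hl2, _⟩ <;>
      rw [← hp1] at he1 <;> rw [← hp2] at he2 <;> split_ifs <;> omega

end CMSAux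
namespace CMSAux

lemma no_good (n m k : ℕ) (hm : m = 2 * k) (hk : 2 ≤ k) (hn : n - 1 = m)
    (f : ZMod m ≃ (SimpleGraph.pathGraph n).edgeSet)
    (hf : CyclicGood (SimpleGraph.pathGraph n) f k) : False := by
  haveI : NeZero m := ⟨by omega⟩
  apply no_cyclic m k hm hk ((f.trans (pathEquiv n).symm).trans (finCongr hn))
  intro i r r' hr hr' hne heq
  have hd := hf i r r' hr hr' hne
  have hfx : ∀ x : ZMod m, (f x : Sym2 (Fin n))
      = ((pathEdge n ((pathEquiv n).symm (f x)) : (SimpleGraph.pathGraph n).edgeSet)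
          : Sym2 (Fin n)) := by
    intro x
    congr 1
    rw [show (pathEdge n ((pathEquiv n).symm (f x)))
        = pathEquiv n ((pathEquiv n).symm (f x)) from rfl, Equiv.apply_symm_apply]
  rw [hfx, hfx] at hd
  have hgap := gap_of_disj _ _ hd
  simp only [Equiv.trans_apply, finCongr_apply, Fin.coe_cast] at heq
  omega

end CMSAux

theorem cms_pathGraph_odd' (n : ℕ) (hn : 5 ≤ n) (hpar : Odd n) :
    cms (SimpleGraph.pathGraph n) = (n - 3) / 2 ∧
    ¬ ∃ f : ZMod (n - 1) ≃ (SimpleGraph.pathGraph n).edgeSet,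
      CyclicGood (SimpleGraph.pathGraph n) f ((n - 1) / 2) := by
  obtain ⟨k, hkn⟩ := hpar
  have hk : 2 ≤ k := by omega
  have hm : n - 1 = 2 * k := by omega
  have hEC := CMSAux.edgeCount_path n
  have hub : ∀ d ∈ {d : ℕ | ∃ f : ZMod (n - 1) ≃ (SimpleGraph.pathGraph n).edgeSet,
      CyclicGood (SimpleGraph.pathGraph n) f d}, d ≤ k - 1 := by
    rintro d ⟨f, hf⟩
    by_contra hlt
    push_neg at hlt
    exact CMSAux.no_good n (n - 1) k hm hk rfl f
      (fun i j j' hj hj' hne => hf i j j' (by omega) (by omega) hne)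
  have hmem : (k - 1) ∈ {d : ℕ | ∃ f : ZMod (n - 1) ≃ (SimpleGraph.pathGraph n).edgeSet,
      CyclicGood (SimpleGraph.pathGraph n) f d} :=
    CMSAux.lower_good n (n - 1) k hm hk rfl
  constructor
  · unfold cms
    rw [hEC]
    rw [IsGreatest.csSup_eq ⟨hmem, hub⟩]
    omega
  · rintro ⟨f, hf⟩
    rw [show (n - 1) / 2 = k by omega] at hf
    exact CMSAux.no_good n (n - 1) k hm hk rfl f hf


/-- For every odd integer `n ≥ 5`, `cms (P_n) = (n-3)/2`; in
particular there is no cyclic ordering of the `n - 1` edges of `P_n` in which every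
`(n-1)/2` cyclically consecutive edges are pairwise disjoint. -/
theorem cms_pathGraph_odd (n : ℕ) (hn : 5 ≤ n) (hpar : Odd n) :
    cms (SimpleGraph.pathGraph n) = (n - 3) / 2 ∧
    ¬ ∃ f : ZMod (n - 1) ≃ (SimpleGraph.pathGraph n).edgeSet,
      CyclicGood (SimpleGraph.pathGraph n) f ((n - 1) / 2) := by
  exact cms_pathGraph_odd' n hn hpar
end
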